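/- Assume additionally ℙ(Z·G ≠ 0) > 0. Let δ₁ > δ₂ > 0, suppose λ̄(δ₁), λ̄(δ₂) ∈ (τ, ∞) satisfy 𝔼[(Z/(λ̄(δᵢ)−Z))²] = 1/δᵢ, and define ζ(λ; δᵢ) := ψ(max{λ, λ̄(δᵢ)}; δᵢ). If λ*(δ₁), λ*(δ₂) ∈ (τ, ∞) satisfy ζ(λ*(δ₁); δ₁) = φ(λ*(δ₁)) and ζ(λ*(δ₂); δ₂) = φ(λ*(δ₂)), then λ*(δ₁) > λ*(δ₂). -/

import Mathlib

open MeasureTheory ProbabilityTheory Real Set Filter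

/-!
By the difference identity
`ψ(b; δ) − ψ(a; δ) = (b − a)(1/δ − 𝔼[Z²/((a − Z)(b − Z))])`, in which the expectation decreases in
`a` and in `b`, the stationarity condition `𝔼[(Z/(λ̄ − Z))²] = 1/δ` makes `λ̄` a minimiser of
`ψ(·; δ)` on `(τ, ∞)` beyond which `ψ(·; δ)` increases. Hence `ζ(λ; δ) ≤ ψ(m; δ)` for every
`m ≥ λ`. Moreover `φ` decreases on `(τ, ∞)` and `ψ(m; δ)` strictly decreases in `δ` when `m > 0`.
If `λ*(δ₁) ≤ λ*(δ₂)`, then with `m = max(λ*(δ₂), λ̄(δ₂))`,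
`φ(λ*(δ₂)) ≤ φ(λ*(δ₁)) = ζ(λ*(δ₁); δ₁) ≤ ψ(m; δ₁) < ψ(m; δ₂) = φ(λ*(δ₂))`, a contradiction.
-/

noncomputable def phiFun {Ω : Type*} [MeasurableSpace Ω] (μ : Measure Ω) (Z G : Ω → ℝ)
    (lam : ℝ) : ℝ :=
  lam * ∫ ω, Z ω * G ω ^ 2 / (lam - Z ω) ∂μ

noncomputable def psiFun {Ω : Type*} [MeasurableSpace Ω] (μ : Measure Ω) (Z : Ω → ℝ)
    (lam Δ : ℝ) : ℝ :=
  lam * (1 / Δ + ∫ ω, Z ω / (lam - Z ω) ∂μ)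

lemma mul_div_sub_le_mul_div_sub {z a b c : ℝ} (hc : 0 ≤ c) (hz : z < a) (hab : a ≤ b) :
    b * (z * c / (b - z)) ≤ a * (z * c / (a - z)) := by
  rw [mul_div_assoc', mul_div_assoc', div_le_div_iff₀ (by linarith) (by linarith)]
  nlinarith [mul_nonneg (sub_nonneg.2 hab) (mul_nonneg (sq_nonneg z) hc)]

lemma div_sub_mul_div_sub_le {z a a' b b' : ℝ} (ha : z < a) (haa' : a ≤ a') (hb : z < b)
    (hbb' : b ≤ b') : z / (a' - z) * (z / (b' - z)) ≤ z / (a - z) * (z / (b - z)) := by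
  rw [div_mul_div_comm, div_mul_div_comm]
  exact div_le_div_of_nonneg_left (mul_self_nonneg z) (by nlinarith)
    (mul_le_mul (by linarith) (by linarith) (by linarith) (by linarith))

section

variable {Ω : Type*} [MeasurableSpace Ω] {μ : Measure Ω} {Z : Ω → ℝ} {τ a b : ℝ}

lemma memLp_top_inv_sub (hZ : AEStronglyMeasurable Z μ) (hZτ : ∀ᵐ ω ∂μ, Z ω ≤ τ)
    (ha : τ < a) : MemLp (fun ω => (a - Z ω)⁻¹) ⊤ μ := by
  refine memLp_top_of_bound (aemeasurable_const.sub hZ.aemeasurable).inv.aestronglyMeasurable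
    (a - τ)⁻¹ ?_
  filter_upwards [hZτ] with ω hω
  rw [norm_inv, Real.norm_of_nonneg (by linarith)]
  exact inv_anti₀ (by linarith) (by linarith)

lemma memLp_top_div_sub (hZ : MemLp Z ⊤ μ) (hZτ : ∀ᵐ ω ∂μ, Z ω ≤ τ) (ha : τ < a) :
    MemLp (fun ω => Z ω / (a - Z ω)) ⊤ μ := by
  simpa only [div_eq_mul_inv] using (memLp_top_inv_sub hZ.1 hZτ ha).mul' hZ

lemma integrable_mul_div_sub {G : Ω → ℝ} (hZ : MemLp Z ⊤ μ) (hZτ : ∀ᵐ ω ∂μ, Z ω ≤ τ)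
    (hG : Integrable (fun ω => G ω ^ 2) μ) (ha : τ < a) :
    Integrable (fun ω => Z ω * G ω ^ 2 / (a - Z ω)) μ := by
  refine (hG.mul_of_top_left (memLp_top_div_sub hZ hZτ ha)).congr (ae_of_all _ fun ω => ?_)
  simp only [Pi.mul_apply]
  ring

lemma phiFun_antitoneOn {G : Ω → ℝ} (hZ : MemLp Z ⊤ μ) (hZτ : ∀ᵐ ω ∂μ, Z ω ≤ τ)
    (hG : Integrable (fun ω => G ω ^ 2) μ) : AntitoneOn (phiFun μ Z G) (Ioi τ) := by
  intro a ha b hb hab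
  simp only [phiFun, ← integral_const_mul]
  refine integral_mono_ae ((integrable_mul_div_sub hZ hZτ hG hb).const_mul b)
    ((integrable_mul_div_sub hZ hZτ hG ha).const_mul a) ?_
  filter_upwards [hZτ] with ω hω
  exact mul_div_sub_le_mul_div_sub (sq_nonneg _) (hω.trans_lt ha) hab

variable [IsFiniteMeasure μ]

lemma integrable_div_sub (hZ : MemLp Z ⊤ μ) (hZτ : ∀ᵐ ω ∂μ, Z ω ≤ τ) (ha : τ < a) :
    Integrable (fun ω => Z ω / (a - Z ω)) μ :=
  (memLp_top_div_sub hZ hZτ ha).integrable le_top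

lemma integrable_div_sub_mul_div_sub (hZ : MemLp Z ⊤ μ) (hZτ : ∀ᵐ ω ∂μ, Z ω ≤ τ) (ha : τ < a)
    (hb : τ < b) : Integrable (fun ω => Z ω / (a - Z ω) * (Z ω / (b - Z ω))) μ :=
  ((memLp_top_div_sub hZ hZτ hb).mul' (memLp_top_div_sub hZ hZτ ha)).integrable le_top

lemma psiFun_sub_psiFun (hZ : MemLp Z ⊤ μ) (hZτ : ∀ᵐ ω ∂μ, Z ω ≤ τ) (ha : τ < a) (hb : τ < b)
    (Δ : ℝ) : psiFun μ Z b Δ - psiFun μ Z a Δ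
      = (b - a) * (1 / Δ - ∫ ω, Z ω / (a - Z ω) * (Z ω / (b - Z ω)) ∂μ) := by
  have hint : b * ∫ ω, Z ω / (b - Z ω) ∂μ - a * ∫ ω, Z ω / (a - Z ω) ∂μ
      = -((b - a) * ∫ ω, Z ω / (a - Z ω) * (Z ω / (b - Z ω)) ∂μ) := by
    rw [← integral_const_mul, ← integral_const_mul, ← integral_const_mul, ← integral_neg,
      ← integral_sub ((integrable_div_sub hZ hZτ hb).const_mul b)
        ((integrable_div_sub hZ hZτ ha).const_mul a)]
    refine integral_congr_ae ?_
    filter_upwards [hZτ] with ω hω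
    have : a - Z ω ≠ 0 := by linarith
    have : b - Z ω ≠ 0 := by linarith
    field_simp
    ring
  unfold psiFun
  linear_combination hint

lemma integral_div_sub_mul_div_sub_anti {a' b' : ℝ} (hZ : MemLp Z ⊤ μ)
    (hZτ : ∀ᵐ ω ∂μ, Z ω ≤ τ) (ha : τ < a) (haa' : a ≤ a') (hb : τ < b) (hbb' : b ≤ b') :
    ∫ ω, Z ω / (a' - Z ω) * (Z ω / (b' - Z ω)) ∂μ
      ≤ ∫ ω, Z ω / (a - Z ω) * (Z ω / (b - Z ω)) ∂μ := by
  refine integral_mono_ae (integrable_div_sub_mul_div_sub hZ hZτ (ha.trans_le haa')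
    (hb.trans_le hbb')) (integrable_div_sub_mul_div_sub hZ hZτ ha hb) ?_
  filter_upwards [hZτ] with ω hω
  exact div_sub_mul_div_sub_le (hω.trans_lt ha) haa' (hω.trans_lt hb) hbb'

variable {lamBar Δ : ℝ}

lemma psiFun_monotoneOn (hZ : MemLp Z ⊤ μ) (hZτ : ∀ᵐ ω ∂μ, Z ω ≤ τ) (hbar : τ < lamBar)
    (hstat : ∫ ω, (Z ω / (lamBar - Z ω)) ^ 2 ∂μ = 1 / Δ) :
    MonotoneOn (fun lam => psiFun μ Z lam Δ) (Ici lamBar) := by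
  intro a ha b _ hab
  have ha' : τ < a := hbar.trans_le ha
  have hcross := integral_div_sub_mul_div_sub_anti hZ hZτ hbar ha hbar (ha.trans hab)
  simp only [← sq, hstat] at hcross
  have hdiff := psiFun_sub_psiFun hZ hZτ ha' (ha'.trans_le hab) Δ
  nlinarith [mul_nonneg (sub_nonneg.2 hab) (sub_nonneg.2 hcross)]

lemma isMinOn_psiFun (hZ : MemLp Z ⊤ μ) (hZτ : ∀ᵐ ω ∂μ, Z ω ≤ τ) (hbar : τ < lamBar)
    (hstat : ∫ ω, (Z ω / (lamBar - Z ω)) ^ 2 ∂μ = 1 / Δ) :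
    IsMinOn (fun lam => psiFun μ Z lam Δ) (Ioi τ) lamBar := by
  intro a (ha : τ < a)
  rcases le_total lamBar a with hle | hle
  · exact psiFun_monotoneOn hZ hZτ hbar hstat self_mem_Ici hle hle
  · have hcross := integral_div_sub_mul_div_sub_anti hZ hZτ ha hle hbar le_rfl
    simp only [← sq, hstat] at hcross
    have hdiff := psiFun_sub_psiFun hZ hZτ ha hbar Δ
    show psiFun μ Z lamBar Δ ≤ psiFun μ Z a Δ
    nlinarith [mul_nonneg (sub_nonneg.2 hle) (sub_nonneg.2 hcross)]

lemma psiFun_max_le {lam m : ℝ} (hZ : MemLp Z ⊤ μ) (hZτ : ∀ᵐ ω ∂μ, Z ω ≤ τ)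
    (hbar : τ < lamBar) (hstat : ∫ ω, (Z ω / (lamBar - Z ω)) ^ 2 ∂μ = 1 / Δ)
    (hm : τ < m) (hle : lam ≤ m) : psiFun μ Z (max lam lamBar) Δ ≤ psiFun μ Z m Δ := by
  rcases le_total lam lamBar with h | h
  · rw [max_eq_right h]
    exact isMinOn_psiFun hZ hZτ hbar hstat hm
  · rw [max_eq_left h]
    exact psiFun_monotoneOn hZ hZτ hbar hstat h (h.trans hle) hle

end

lemma psiFun_strictAntiOn {Ω : Type*} [MeasurableSpace Ω] (μ : Measure Ω) (Z : Ω → ℝ) {lam : ℝ}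
    (hlam : 0 < lam) : StrictAntiOn (psiFun μ Z lam) (Ioi 0) := by
  intro a (ha : 0 < a) b _ hab
  unfold psiFun
  gcongr

lemma integrable_sq_of_map_eq_gaussianReal {Ω : Type*} [MeasurableSpace Ω] {μ : Measure Ω}
    {G : Ω → ℝ} (hG : Measurable G) (hmap : μ.map G = gaussianReal 0 1) :
    Integrable (fun ω => G ω ^ 2) μ := by
  have : MemLp id 2 (μ.map G) := hmap ▸ memLp_id_gaussianReal 2
  exact ((memLp_map_measure_iff aestronglyMeasurable_id hG.aemeasurable).1 this).integrable_sq

theorem lamStar_ordering_general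
    {Ω : Type*} [MeasureSpace Ω] [IsProbabilityMeasure (ℙ : Measure Ω)]
    (G Z : Ω → ℝ) (hGmeas : Measurable G) (hZmeas : Measurable Z)
    (hG : Measure.map G ℙ = gaussianReal 0 1)
    (hZbdd : ∃ C : ℝ, ∀ᵐ ω ∂ℙ, |Z ω| ≤ C)
    (τ : ℝ) (hτ : τ = essSup Z ℙ) (hτpos : 0 < τ)
    (φ : ℝ → ℝ) (ψ : ℝ → ℝ → ℝ)
    (hφ : ∀ lam : ℝ, φ lam = lam * ∫ ω, Z ω * (G ω) ^ 2 / (lam - Z ω) ∂ℙ)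
    (hψ : ∀ (lam Δ : ℝ), ψ lam Δ = lam * (1 / Δ + ∫ ω, Z ω / (lam - Z ω) ∂ℙ))
    (δ₁ δ₂ : ℝ) (hδ₂ : 0 < δ₂) (hδ : δ₂ < δ₁)
    (lamBar₁ lamBar₂ : ℝ)
    (hlamBar₁ : lamBar₁ ∈ Set.Ioi τ)
    (hstat₁ : ∫ ω, (Z ω / (lamBar₁ - Z ω)) ^ 2 ∂ℙ = 1 / δ₁)
    (lamStar₁ lamStar₂ : ℝ)
    (hlamStar₁ : lamStar₁ ∈ Set.Ioi τ)
    (hsol₁ : ψ (max lamStar₁ lamBar₁) δ₁ = φ lamStar₁)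
    (hsol₂ : ψ (max lamStar₂ lamBar₂) δ₂ = φ lamStar₂) :
    lamStar₂ < lamStar₁ := by
  obtain rfl : φ = phiFun ℙ Z G := funext hφ
  obtain rfl : ψ = psiFun ℙ Z := funext₂ hψ
  obtain ⟨C, hC⟩ := hZbdd
  have hZ : MemLp Z ⊤ ℙ :=
    memLp_top_of_bound hZmeas.aestronglyMeasurable C (by simpa only [Real.norm_eq_abs] using hC)
  have hZτ : ∀ᵐ ω ∂ℙ, Z ω ≤ τ :=
    hτ ▸ ae_le_essSup ⟨C, eventually_map.2 (hC.mono fun ω h => (abs_le.1 h).2)⟩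
  by_contra! hle
  have hm : τ < max lamStar₂ lamBar₂ := lt_max_of_lt_left (hlamStar₁.trans_le hle)
  have hcycle := calc
    phiFun ℙ Z G lamStar₂ ≤ phiFun ℙ Z G lamStar₁ :=
      phiFun_antitoneOn hZ hZτ (integrable_sq_of_map_eq_gaussianReal hGmeas hG) hlamStar₁
        (hlamStar₁.trans_le hle) hle
    _ = psiFun ℙ Z (max lamStar₁ lamBar₁) δ₁ := hsol₁.symm
    _ ≤ psiFun ℙ Z (max lamStar₂ lamBar₂) δ₁ :=
      psiFun_max_le hZ hZτ hlamBar₁ hstat₁ hm (hle.trans (le_max_left _ _))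
    _ < psiFun ℙ Z (max lamStar₂ lamBar₂) δ₂ :=
      psiFun_strictAntiOn ℙ Z (hτpos.trans hm) hδ₂ (hδ₂.trans hδ) hδ
    _ = phiFun ℙ Z G lamStar₂ := hsol₂
  exact lt_irrefl _ hcycle

/-- Assuming `ℙ(Z·G ≠ 0) > 0`: for `δ₁ > δ₂ > 0`, the fixed points `λ*(δᵢ) ∈ (τ,∞)` of
`ζ(λ; δᵢ) = φ(λ)` (with `ζ(λ;δᵢ) = ψ(max{λ, λ̄(δᵢ)}; δᵢ)`) satisfy `λ*(δ₁) > λ*(δ₂)`. -/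
theorem lamStar_ordering
    {Ω : Type*} [MeasureSpace Ω] [IsProbabilityMeasure (ℙ : Measure Ω)]
    (G Z : Ω → ℝ) (hGmeas : Measurable G) (hZmeas : Measurable Z)
    (hG : Measure.map G ℙ = gaussianReal 0 1)
    (hZbdd : ∃ C : ℝ, ∀ᵐ ω ∂ℙ, |Z ω| ≤ C)
    (τ : ℝ) (hτ : τ = essSup Z ℙ) (hτpos : 0 < τ)
    (hZ0 : ℙ {ω | Z ω = 0} < 1)
    (hZG : 0 < ℙ {ω | Z ω * G ω ≠ 0})
    (φ : ℝ → ℝ) (ψ : ℝ → ℝ → ℝ)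
    (hφ : ∀ lam : ℝ, φ lam = lam * ∫ ω, Z ω * (G ω) ^ 2 / (lam - Z ω) ∂ℙ)
    (hψ : ∀ (lam Δ : ℝ), ψ lam Δ = lam * (1 / Δ + ∫ ω, Z ω / (lam - Z ω) ∂ℙ))
    (δ₁ δ₂ : ℝ) (hδ₂ : 0 < δ₂) (hδ : δ₂ < δ₁)
    (lamBar₁ lamBar₂ : ℝ)
    (hlamBar₁ : lamBar₁ ∈ Set.Ioi τ) (hlamBar₂ : lamBar₂ ∈ Set.Ioi τ)
    (hstat₁ : ∫ ω, (Z ω / (lamBar₁ - Z ω)) ^ 2 ∂ℙ = 1 / δ₁)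
    (hstat₂ : ∫ ω, (Z ω / (lamBar₂ - Z ω)) ^ 2 ∂ℙ = 1 / δ₂)
    (lamStar₁ lamStar₂ : ℝ)
    (hlamStar₁ : lamStar₁ ∈ Set.Ioi τ) (hlamStar₂ : lamStar₂ ∈ Set.Ioi τ)
    (hsol₁ : ψ (max lamStar₁ lamBar₁) δ₁ = φ lamStar₁)
    (hsol₂ : ψ (max lamStar₂ lamBar₂) δ₂ = φ lamStar₂) :
    lamStar₂ < lamStar₁ :=
  lamStar_ordering_general G Z hGmeas hZmeas hG hZbdd τ hτ hτpos φ ψ hφ hψ δ₁ δ₂ hδ₂ hδ lamBar₁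
    lamBar₂ hlamBar₁ hstat₁ lamStar₁ lamStar₂ hlamStar₁ hsol₁ hsol₂
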